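/- Key approximation lemma (equation (36)). Fix t ∈ ℝ. Suppose x ∈ 𝓑_{ε1,ε2}, g is a window function with threshold τ0 and corresponding α, and σ(t) > 0 satisfies the separation condition σ(t) ≥ 2α/(φ'_k(t) − φ'_{k−1}(t)) for all t and k = 1,…,K. Then for every ℓ ∈ {0,1,…,K} and every η with |η − φ'_ℓ(t)| < α/σ(t), |Ṽ_x(t,η) − x_ℓ(t) ĝ(σ(t)(η − φ'_ℓ(t)))| ≤ err_ℓ(t). In particular, taking η = φ'_ℓ(t), |Ṽ_x(t, φ'_ℓ(t))| ≥ A_ℓ(t) − err_ℓ(t). -/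

import Mathlib

/-!
Near `t` each component is a pure tone: by the Lipschitz bound on `A_k` and the second-order
Taylor bound on `φ_k`, `|x_k(t+τ) − x_k(t) e^{2πiφ'_k(t)τ}| ≤ A_k(t)(ε1|τ| + πε2τ²)`. The adaptive
STFT of that tone is exactly `x_k(t) ĝ(σ(t)(η − φ'_k(t)))`, and integrating the error against the
dilated window costs `A_k(t) λ_0(t)`. Summing consecutive gaps, the separation condition gives
`σ(t)|φ'_ℓ(t) − φ'_k(t)| ≥ 2α|ℓ − k|`, so for `|η − φ'_ℓ(t)| < α/σ(t)` the tone of every other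
component is seen at frequency at least `α(2|ℓ − k| − 1)`, where `|ĝ|` is at most its value there.
At `η = φ'_ℓ(t)`, `ĝ(0) = 1` gives the lower bound.
-/

open MeasureTheory Real

noncomputable section

/-- The adaptive short-time Fourier transform with time-varying window width `σ`. -/
def aSTFT (x : ℝ → ℂ) (g : ℝ → ℝ) (σ : ℝ → ℝ) (t η : ℝ) : ℂ :=
  ∫ τ : ℝ, x (t + τ) * (((σ t)⁻¹ * g (τ / σ t) : ℝ) : ℂ) *
    Complex.exp (-(2 * (π : ℂ) * η * τ) * Complex.I)

/-- The Fourier transform `ĝ` of the window `g`. -/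
def hatg (g : ℝ → ℝ) (ξ : ℝ) : ℂ :=
  ∫ τ : ℝ, (g τ : ℂ) * Complex.exp (-(2 * (π : ℂ) * ξ * τ) * Complex.I)

/-- The absolute moments `I_n = ∫ |τ^n g(τ)| dτ` of the window. -/
def momentI (g : ℝ → ℝ) (n : ℕ) : ℝ := ∫ τ : ℝ, |τ| ^ n * |g τ|

/-- The `k`-th component `x_k(s) = A_k(s) e^{2πi φ_k(s)}`. -/
def xcomp (A φ : ℕ → ℝ → ℝ) (k : ℕ) (s : ℝ) : ℂ :=
  (A k s : ℂ) * Complex.exp ((2 * (π : ℂ) * φ k s) * Complex.I)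

/-- `M(t) = Σ_{k=0}^K A_k(t)`. -/
def Msum (K : ℕ) (A : ℕ → ℝ → ℝ) (t : ℝ) : ℝ := ∑ k ∈ Finset.range (K + 1), A k t

/-- `μ(t) = min_{0 ≤ k ≤ K} A_k(t)`. -/
def muMin (K : ℕ) (A : ℕ → ℝ → ℝ) (t : ℝ) : ℝ :=
  (Finset.range (K + 1)).inf' (by simp) fun k => A k t

/-- `λ_0(t) = ε1 I_1 σ(t) + π ε2 I_2 σ(t)²`. -/
def lam0 (g : ℝ → ℝ) (σ : ℝ → ℝ) (ε1 ε2 t : ℝ) : ℝ :=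
  ε1 * momentI g 1 * σ t + π * ε2 * momentI g 2 * σ t ^ 2

/-- `err_ℓ(t) = M(t)λ_0(t) + Σ_{k≠ℓ} A_k(t) |ĝ(α(2|ℓ−k|−1))|`. -/
def errl (K : ℕ) (A : ℕ → ℝ → ℝ) (g : ℝ → ℝ) (σ : ℝ → ℝ) (α ε1 ε2 : ℝ)
    (l : ℕ) (t : ℝ) : ℝ :=
  Msum K A t * lam0 g σ ε1 ε2 t +
    ∑ k ∈ (Finset.range (K + 1)).erase l,
      A k t * ‖hatg g (α * (2 * |(l : ℝ) - (k : ℝ)| - 1))‖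

/-- `𝓖_t = {η : |Ṽ_x(t,η)| > ε̃1}`. -/
def Gt (x : ℝ → ℂ) (g : ℝ → ℝ) (σ : ℝ → ℝ) (t eps : ℝ) : Set ℝ :=
  {η | eps < ‖aSTFT x g σ t η‖}

/-- `𝓖_{t,k} = {η ∈ 𝓖_t : |η − φ'_k(t)| < α/σ(t)}`. -/
def Gtk (x : ℝ → ℂ) (g : ℝ → ℝ) (σ : ℝ → ℝ) (φ : ℕ → ℝ → ℝ) (α t eps : ℝ)
    (k : ℕ) : Set ℝ :=
  {η | η ∈ Gt x g σ t eps ∧ |η - deriv (φ k) t| < α / σ t}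

section Window

variable {g : ℝ → ℝ} {s : ℝ}

theorem hatg_zero : hatg g 0 = ((∫ τ, g τ : ℝ) : ℂ) := by
  simp only [hatg, Complex.ofReal_zero, mul_zero, zero_mul, neg_zero, Complex.exp_zero, mul_one]
  exact integral_ofReal

theorem integral_dilate_mul_exp (hs : 0 < s) (ξ : ℝ) :
    ∫ τ : ℝ, ((s⁻¹ * g (τ / s) : ℝ) : ℂ) * Complex.exp (-(2 * (π : ℂ) * ξ * τ) * Complex.I) =
      hatg g (s * ξ) := by
  have hs' : (s : ℂ) ≠ 0 := Complex.ofReal_ne_zero.mpr hs.ne'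
  let F : ℝ → ℂ := fun u => (s⁻¹ : ℂ) *
    ((g u : ℂ) * Complex.exp (-(2 * (π : ℂ) * (s * ξ : ℝ) * u) * Complex.I))
  have hF : ∀ τ : ℝ, ((s⁻¹ * g (τ / s) : ℝ) : ℂ) *
      Complex.exp (-(2 * (π : ℂ) * ξ * τ) * Complex.I) = F (τ / s) := by
    intro τ
    simp only [F]
    push_cast
    field_simp
  simp_rw [hF]
  rw [Measure.integral_comp_div F s]
  simp only [F]
  rw [integral_const_mul, abs_of_pos hs, Complex.real_smul]
  change (s : ℂ) * ((s : ℂ)⁻¹ * hatg g (s * ξ)) = _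
  field_simp

theorem integrable_abs_pow_mul_abs_dilate {n : ℕ} (hg : Integrable fun τ : ℝ => τ ^ n * g τ)
    (hs : 0 < s) : Integrable fun τ : ℝ => |τ| ^ n * |s⁻¹ * g (τ / s)| := by
  refine (((hg.comp_div hs.ne').abs).const_mul (s ^ n * s⁻¹)).congr
    (Filter.Eventually.of_forall fun τ => ?_)
  simp only [abs_mul, abs_pow, abs_div, abs_inv, abs_of_pos hs, div_pow]
  field_simp

theorem integral_abs_pow_mul_abs_dilate (hs : 0 < s) (n : ℕ) :
    ∫ τ : ℝ, |τ| ^ n * |s⁻¹ * g (τ / s)| = s ^ n * momentI g n := by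
  let F : ℝ → ℝ := fun u => (s ^ n * s⁻¹) * (|u| ^ n * |g u|)
  have hF : ∀ τ : ℝ, |τ| ^ n * |s⁻¹ * g (τ / s)| = F (τ / s) := by
    intro τ
    simp only [F, abs_mul, abs_div, abs_inv, abs_of_pos hs, div_pow]
    field_simp
  simp_rw [hF, Measure.integral_comp_div F s, F, integral_const_mul, momentI, abs_of_pos hs,
    smul_eq_mul]
  field_simp

end Window

theorem norm_exp_mul_I_sub_exp_mul_I_le (a b : ℝ) :
    ‖Complex.exp (a * Complex.I) - Complex.exp (b * Complex.I)‖ ≤ |a - b| := by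
  have h : Complex.exp (a * Complex.I) - Complex.exp (b * Complex.I) =
      Complex.exp (b * Complex.I) * (Complex.exp (Complex.I * (a - b : ℝ)) - 1) := by
    rw [mul_sub, ← Complex.exp_add]
    push_cast
    ring_nf
  rw [h, norm_mul, Complex.norm_exp_ofReal_mul_I, one_mul, ← Real.norm_eq_abs]
  exact Real.norm_exp_I_mul_ofReal_sub_one_le

theorem abs_sub_sub_deriv_mul_le {φ : ℝ → ℝ} {ε : ℝ} (hφ : ContDiff ℝ 2 φ)
    (hφ'' : ∀ s, |deriv (deriv φ) s| ≤ ε) (t τ : ℝ) :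
    |φ (t + τ) - φ t - deriv φ t * τ| ≤ ε * τ ^ 2 / 2 := by
  have hφ1 : Differentiable ℝ φ := hφ.differentiable (by norm_num)
  have hφ2 : Differentiable ℝ (deriv φ) :=
    (hφ.iterate_deriv' 1 1).differentiable (by norm_num)
  have hlip : ∀ u, |deriv φ (t + u) - deriv φ t| ≤ ε * |u| := by
    intro u
    simpa [Real.norm_eq_abs] using Convex.norm_image_sub_le_of_norm_deriv_le
      (fun v _ => hφ2 v) (fun v _ => (Real.norm_eq_abs _).trans_le (hφ'' v)) convex_univ
      (Set.mem_univ t) (Set.mem_univ (t + u))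
  -- rescale to `[0, 1]` so that the fencing argument covers both signs of `τ`
  let f : ℝ → ℝ := fun u => φ (t + u * τ) - φ t - deriv φ t * (u * τ)
  have hf : ∀ u, HasDerivAt f (τ * (deriv φ (t + u * τ) - deriv φ t)) u := by
    intro u
    have h := ((hφ1 (t + u * τ)).hasDerivAt.comp u
      (((hasDerivAt_id u).mul_const τ).const_add t))
    exact ((h.sub_const (φ t)).sub (((hasDerivAt_id u).mul_const τ).const_mul
      (deriv φ t))).congr_deriv (by ring)
  have hB : ∀ u, HasDerivAt (fun u => ε * τ ^ 2 * u ^ 2 / 2) (ε * τ ^ 2 * u) u := fun u =>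
    (((hasDerivAt_pow 2 u).const_mul (ε * τ ^ 2)).div_const 2).congr_deriv
      (by norm_num; ring)
  have hfence := image_norm_le_of_norm_deriv_right_le_deriv_boundary
    (fun u _ => (hf u).continuousAt.continuousWithinAt) (fun u _ => (hf u).hasDerivWithinAt)
    (by simp [f]) hB ?_ (Set.right_mem_Icc.2 zero_le_one)
  · simpa [f, Real.norm_eq_abs] using hfence
  · intro u hu
    rw [Real.norm_eq_abs, abs_mul]
    calc |τ| * |deriv φ (t + u * τ) - deriv φ t| ≤ |τ| * (ε * |u * τ|) :=
          mul_le_mul_of_nonneg_left (hlip _) (abs_nonneg τ)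
      _ = ε * τ ^ 2 * u := by rw [abs_mul, abs_of_nonneg hu.1, ← sq_abs τ]; ring

section WindowedTransform

variable {x y : ℝ → ℂ} {g : ℝ → ℝ} {σ : ℝ → ℝ} {t η : ℝ}

def stftIntegrand (x : ℝ → ℂ) (g : ℝ → ℝ) (σ : ℝ → ℝ) (t η τ : ℝ) : ℂ :=
  x (t + τ) * (((σ t)⁻¹ * g (τ / σ t) : ℝ) : ℂ) *
    Complex.exp (-(2 * (π : ℂ) * η * τ) * Complex.I)

theorem aSTFT_eq_integral (x : ℝ → ℂ) (g : ℝ → ℝ) (σ : ℝ → ℝ) (t η : ℝ) :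
    aSTFT x g σ t η = ∫ τ, stftIntegrand x g σ t η τ := rfl

theorem norm_exp_neg_two_pi_mul_I (η τ : ℝ) :
    ‖Complex.exp (-(2 * (π : ℂ) * η * τ) * Complex.I)‖ = 1 := by
  rw [Complex.norm_exp]
  simp

theorem norm_stftIntegrand (x : ℝ → ℂ) (g : ℝ → ℝ) (σ : ℝ → ℝ) (t η τ : ℝ) :
    ‖stftIntegrand x g σ t η τ‖ = ‖x (t + τ)‖ * |(σ t)⁻¹ * g (τ / σ t)| := by
  rw [stftIntegrand, norm_mul, norm_mul, Complex.norm_real, Real.norm_eq_abs,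
    norm_exp_neg_two_pi_mul_I, mul_one]

theorem integrable_stftIntegrand {C : ℝ} (hx : Continuous x) (hxC : ∀ u, ‖x u‖ ≤ C)
    (hg : Integrable g) (hσt : 0 < σ t) : Integrable (stftIntegrand x g σ t η) := by
  have hw : Integrable fun τ => (((σ t)⁻¹ * g (τ / σ t) : ℝ) : ℂ) :=
    ((hg.comp_div hσt.ne').const_mul _).ofReal
  have hcont : Continuous fun τ : ℝ =>
      x (t + τ) * Complex.exp (-(2 * (π : ℂ) * η * τ) * Complex.I) := by fun_prop
  refine (hw.bdd_mul (c := C) hcont.aestronglyMeasurable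
    (Filter.Eventually.of_forall fun τ => ?_)).congr (Filter.Eventually.of_forall fun τ => ?_)
  · rw [norm_mul, norm_exp_neg_two_pi_mul_I, mul_one]
    exact hxC _
  · simp only [stftIntegrand]
    ring

theorem aSTFT_sum {ι : Type*} (S : Finset ι) (f : ι → ℝ → ℂ)
    (hf : ∀ k ∈ S, Integrable (stftIntegrand (f k) g σ t η)) :
    aSTFT (fun u => ∑ k ∈ S, f k u) g σ t η = ∑ k ∈ S, aSTFT (f k) g σ t η := by
  simp only [aSTFT_eq_integral]
  rw [← integral_finsetSum S hf]
  simp only [stftIntegrand, Finset.sum_mul]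

theorem aSTFT_tone (c : ℂ) (ω : ℝ) (hσt : 0 < σ t) :
    aSTFT (fun u => c * Complex.exp (2 * (π : ℂ) * ω * (u - t) * Complex.I)) g σ t η =
      c * hatg g (σ t * (η - ω)) := by
  rw [aSTFT, ← integral_dilate_mul_exp hσt, ← integral_const_mul]
  congr 1 with τ
  have hphase : Complex.exp (2 * (π : ℂ) * ω * ((t + τ : ℝ) - t) * Complex.I) *
      Complex.exp (-(2 * (π : ℂ) * η * τ) * Complex.I) =
        Complex.exp (-(2 * (π : ℂ) * (η - ω : ℝ) * τ) * Complex.I) := by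
    rw [← Complex.exp_add]
    push_cast
    ring_nf
  linear_combination (c * (((σ t)⁻¹ * g (τ / σ t) : ℝ) : ℂ)) * hphase

theorem norm_aSTFT_sub_le (a b : ℝ) (hx : Integrable (stftIntegrand x g σ t η))
    (hy : Integrable (stftIntegrand y g σ t η)) (hg₁ : Integrable fun τ : ℝ => τ * g τ)
    (hg₂ : Integrable fun τ : ℝ => τ ^ 2 * g τ) (hσt : 0 < σ t)
    (hxy : ∀ τ, ‖x (t + τ) - y (t + τ)‖ ≤ a * |τ| + b * τ ^ 2) :
    ‖aSTFT x g σ t η - aSTFT y g σ t η‖ ≤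
      a * momentI g 1 * σ t + b * momentI g 2 * σ t ^ 2 := by
  have hI₁ := integrable_abs_pow_mul_abs_dilate (n := 1) (by simpa using hg₁) hσt
  have hI₂ := integrable_abs_pow_mul_abs_dilate (n := 2) hg₂ hσt
  have hbound : ∀ τ, ‖stftIntegrand x g σ t η τ - stftIntegrand y g σ t η τ‖ ≤
      a * (|τ| ^ 1 * |(σ t)⁻¹ * g (τ / σ t)|) + b * (|τ| ^ 2 * |(σ t)⁻¹ * g (τ / σ t)|) := by
    intro τ
    have h : stftIntegrand x g σ t η τ - stftIntegrand y g σ t η τ =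
        stftIntegrand (x - y) g σ t η τ := by
      simp only [stftIntegrand, Pi.sub_apply]
      ring
    rw [h, norm_stftIntegrand, pow_one, sq_abs]
    calc ‖(x - y) (t + τ)‖ * |(σ t)⁻¹ * g (τ / σ t)|
        ≤ (a * |τ| + b * τ ^ 2) * |(σ t)⁻¹ * g (τ / σ t)| :=
          mul_le_mul_of_nonneg_right (hxy τ) (abs_nonneg _)
      _ = _ := by ring
  rw [aSTFT_eq_integral, aSTFT_eq_integral, ← integral_sub hx hy]
  refine (norm_integral_le_of_norm_le ((hI₁.const_mul a).add (hI₂.const_mul b))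
    (Filter.Eventually.of_forall hbound)).trans_eq ?_
  simp only [Pi.add_apply]
  rw [integral_add (hI₁.const_mul a) (hI₂.const_mul b), integral_const_mul, integral_const_mul,
    integral_abs_pow_mul_abs_dilate hσt, integral_abs_pow_mul_abs_dilate hσt]
  ring

end WindowedTransform

section Components

variable {A φ : ℕ → ℝ → ℝ} {k : ℕ}

theorem norm_xcomp (A φ : ℕ → ℝ → ℝ) (k : ℕ) (s : ℝ) : ‖xcomp A φ k s‖ = |A k s| := by
  simp [xcomp, Complex.norm_exp]

theorem integrable_stftIntegrand_xcomp {g σ : ℝ → ℝ} {t η C : ℝ} (hA : Continuous (A k))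
    (hφ : Continuous (φ k)) (hAC : ∀ s, |A k s| ≤ C) (hg : Integrable g) (hσt : 0 < σ t) :
    Integrable (stftIntegrand (xcomp A φ k) g σ t η) :=
  integrable_stftIntegrand (by unfold xcomp; fun_prop)
    (fun s => (norm_xcomp A φ k s).trans_le (hAC s)) hg hσt

theorem norm_xcomp_sub_tone_le {ε1 ε2 t τ : ℝ} (hA : 0 ≤ A k t)
    (hAlip : |A k (t + τ) - A k t| ≤ ε1 * |τ| * A k t)
    (hφ : |φ k (t + τ) - φ k t - deriv (φ k) t * τ| ≤ ε2 * τ ^ 2 / 2) :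
    ‖xcomp A φ k (t + τ) -
        xcomp A φ k t * Complex.exp (2 * (π : ℂ) * deriv (φ k) t * τ * Complex.I)‖ ≤
      A k t * ε1 * |τ| + A k t * π * ε2 * τ ^ 2 := by
  set θ : ℝ := 2 * π * φ k (t + τ)
  set θ₀ : ℝ := 2 * π * (φ k t + deriv (φ k) t * τ)
  have hsplit : xcomp A φ k (t + τ) -
      xcomp A φ k t * Complex.exp (2 * (π : ℂ) * deriv (φ k) t * τ * Complex.I) =
        ((A k (t + τ) - A k t : ℝ) : ℂ) * Complex.exp (θ * Complex.I) +
          (A k t : ℂ) * (Complex.exp (θ * Complex.I) - Complex.exp (θ₀ * Complex.I)) := by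
    have hθ₀ : Complex.exp (2 * (π : ℂ) * φ k t * Complex.I) *
        Complex.exp (2 * (π : ℂ) * deriv (φ k) t * τ * Complex.I) =
          Complex.exp (θ₀ * Complex.I) := by
      rw [← Complex.exp_add]
      push_cast [θ₀]
      ring_nf
    simp only [xcomp, θ]
    push_cast
    linear_combination -(A k t : ℂ) * hθ₀
  have hθ : |θ - θ₀| ≤ π * ε2 * τ ^ 2 := by
    rw [show θ - θ₀ = 2 * π * (φ k (t + τ) - φ k t - deriv (φ k) t * τ) by ring, abs_mul,
      abs_of_pos (by positivity)]
    nlinarith [pi_pos]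
  rw [hsplit]
  calc _ ≤ |A k (t + τ) - A k t| + A k t * |θ - θ₀| := by
        refine (norm_add_le _ _).trans (add_le_add ?_ ?_)
        · rw [norm_mul, Complex.norm_exp_ofReal_mul_I, mul_one, Complex.norm_real,
            Real.norm_eq_abs]
        · rw [norm_mul, Complex.norm_real, Real.norm_eq_abs, abs_of_nonneg hA]
          exact mul_le_mul_of_nonneg_left (norm_exp_mul_I_sub_exp_mul_I_le θ θ₀) hA
    _ ≤ ε1 * |τ| * A k t + A k t * (π * ε2 * τ ^ 2) :=
        add_le_add hAlip (mul_le_mul_of_nonneg_left hθ hA)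
    _ = _ := by ring

theorem norm_aSTFT_xcomp_sub_le {g σ : ℝ → ℝ} {t η ε1 ε2 C : ℝ} (hg : Integrable g)
    (hg₁ : Integrable fun τ : ℝ => τ * g τ) (hg₂ : Integrable fun τ : ℝ => τ ^ 2 * g τ)
    (hσt : 0 < σ t) (hA : Continuous (A k)) (hAC : ∀ s, |A k s| ≤ C) (hAt : 0 ≤ A k t)
    (hAlip : ∀ τ, |A k (t + τ) - A k t| ≤ ε1 * |τ| * A k t) (hφ : ContDiff ℝ 2 (φ k))
    (hφ'' : ∀ s, |deriv (deriv (φ k)) s| ≤ ε2) :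
    ‖aSTFT (xcomp A φ k) g σ t η - xcomp A φ k t * hatg g (σ t * (η - deriv (φ k) t))‖ ≤
      A k t * lam0 g σ ε1 ε2 t := by
  have htone : Integrable (stftIntegrand (fun u => xcomp A φ k t *
      Complex.exp (2 * (π : ℂ) * deriv (φ k) t * (u - t) * Complex.I)) g σ t η) :=
    integrable_stftIntegrand (C := ‖xcomp A φ k t‖) (by fun_prop)
      (fun u => by simp [Complex.norm_exp]) hg hσt
  rw [← aSTFT_tone _ _ hσt]
  refine (norm_aSTFT_sub_le (A k t * ε1) (A k t * π * ε2)
    (integrable_stftIntegrand_xcomp hA hφ.continuous hAC hg hσt) htone hg₁ hg₂ hσt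
    fun τ => ?_).trans_eq (by rw [lam0]; ring)
  rw [show ((t + τ : ℝ) : ℂ) - t = τ by push_cast; ring]
  exact norm_xcomp_sub_tone_le hAt (hAlip τ) (abs_sub_sub_deriv_mul_le hφ hφ'' t τ)

end Components

section Frequencies

variable {f : ℕ → ℝ} {δ : ℝ} {K : ℕ}

theorem mul_sub_le_sub_of_le_sub_pred (h : ∀ k, 1 ≤ k → k ≤ K → δ ≤ f k - f (k - 1))
    {i j : ℕ} (hij : i ≤ j) (hj : j ≤ K) : δ * ((j : ℝ) - i) ≤ f j - f i := by
  induction j, hij using Nat.le_induction with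
  | base => simp
  | succ j hij ih =>
    have hstep := h (j + 1) (by omega) hj
    rw [Nat.add_sub_cancel] at hstep
    push_cast
    linarith [ih (by omega)]

theorem mul_abs_sub_le_abs_sub_of_le_sub_pred (h : ∀ k, 1 ≤ k → k ≤ K → δ ≤ f k - f (k - 1))
    {k l : ℕ} (hk : k ≤ K) (hl : l ≤ K) : δ * |(l : ℝ) - k| ≤ |f l - f k| := by
  rcases le_total k l with hkl | hlk
  · rw [abs_of_nonneg (sub_nonneg.2 (Nat.cast_le.2 hkl))]
    exact (mul_sub_le_sub_of_le_sub_pred h hkl hl).trans (le_abs_self _)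
  · rw [abs_sub_comm, abs_sub_comm (f l), abs_of_nonneg (sub_nonneg.2 (Nat.cast_le.2 hlk))]
    exact (mul_sub_le_sub_of_le_sub_pred h hlk hk).trans (le_abs_self _)

theorem one_le_abs_natCast_sub_natCast {k l : ℕ} (hkl : k ≠ l) : (1 : ℝ) ≤ |(l : ℝ) - k| := by
  exact_mod_cast Int.one_le_abs (sub_ne_zero.2 (Int.ofNat_inj.not.2 hkl.symm))

end Frequencies

theorem deriv_sub_deriv_pred_pos {K : ℕ} {φ : ℕ → ℝ → ℝ} (hφ0 : ∀ s, φ 0 s = 0)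
    (hφ'pos : ∀ k, 1 ≤ k → k ≤ K → ∃ c > 0, ∀ s, c ≤ deriv (φ k) s)
    (hfreq : ∃ d > 0, ∀ k, 2 ≤ k → k ≤ K → ∀ s, d ≤ deriv (φ k) s - deriv (φ (k - 1)) s)
    {k : ℕ} (hk1 : 1 ≤ k) (hkK : k ≤ K) (s : ℝ) : 0 < deriv (φ k) s - deriv (φ (k - 1)) s := by
  rcases hk1.eq_or_lt with rfl | hk2
  · obtain ⟨c, hc, hcle⟩ := hφ'pos 1 le_rfl hkK
    simpa [show φ 0 = 0 from funext hφ0] using hc.trans_le (hcle s)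
  · obtain ⟨d, hd, hdle⟩ := hfreq
    exact hd.trans_le (hdle k hk2 hkK s)

theorem norm_hatg_le_of_separated {g : ℝ → ℝ} (heven : ∀ ξ, ‖hatg g (-ξ)‖ = ‖hatg g ξ‖)
    (hdec : ∀ ξ1 ξ2, 0 ≤ ξ1 → ξ1 ≤ ξ2 → ‖hatg g ξ2‖ ≤ ‖hatg g ξ1‖) {s α n η ω ω' : ℝ}
    (hs : 0 < s) (hn : 1 ≤ n) (hsep : 2 * α / s * n ≤ |ω - ω'|) (hη : |η - ω| < α / s) :
    ‖hatg g (s * (η - ω'))‖ ≤ ‖hatg g (α * (2 * n - 1))‖ := by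
  have hα : 0 < α := (div_pos_iff_of_pos_right hs).1 ((abs_nonneg _).trans_lt hη)
  rw [div_mul_eq_mul_div, div_le_iff₀' hs] at hsep
  rw [lt_div_iff₀' hs] at hη
  have htri : s * |ω - ω'| ≤ s * |η - ω| + s * |η - ω'| := by
    rw [← mul_add, abs_sub_comm η ω]
    exact mul_le_mul_of_nonneg_left (abs_sub_le ω η ω') hs.le
  have hfar : α * (2 * n - 1) ≤ |s * (η - ω')| := by
    rw [abs_mul, abs_of_pos hs]
    linarith
  have habs : ‖hatg g (s * (η - ω'))‖ = ‖hatg g |s * (η - ω')|‖ := by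
    rcases abs_choice (s * (η - ω')) with h | h <;> rw [h]
    rw [heven]
  rw [habs]
  exact hdec _ _ (by nlinarith) hfar

theorem norm_aSTFT_sub_le_errl {K l : ℕ} {A φ : ℕ → ℝ → ℝ} {x : ℝ → ℂ} {g σ : ℝ → ℝ}
    {α ε1 ε2 t η : ℝ} (hl : l ≤ K) (hx : ∀ s, x s = ∑ k ∈ Finset.range (K + 1), xcomp A φ k s)
    (hA : ∀ k ≤ K, 0 ≤ A k t) (hint : ∀ k ≤ K, Integrable (stftIntegrand (xcomp A φ k) g σ t η))
    (hcomp : ∀ k ≤ K, ‖aSTFT (xcomp A φ k) g σ t η -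
      xcomp A φ k t * hatg g (σ t * (η - deriv (φ k) t))‖ ≤ A k t * lam0 g σ ε1 ε2 t)
    (hcross : ∀ k ≤ K, k ≠ l → ‖hatg g (σ t * (η - deriv (φ k) t))‖ ≤
      ‖hatg g (α * (2 * |(l : ℝ) - (k : ℝ)| - 1))‖) :
    ‖aSTFT x g σ t η - xcomp A φ l t * hatg g (σ t * (η - deriv (φ l) t))‖ ≤
      errl K A g σ α ε1 ε2 l t := by
  set T : ℕ → ℂ := fun k => xcomp A φ k t * hatg g (σ t * (η - deriv (φ k) t))
  have hV : aSTFT x g σ t η = ∑ k ∈ Finset.range (K + 1), aSTFT (xcomp A φ k) g σ t η := by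
    rw [show x = fun s => ∑ k ∈ Finset.range (K + 1), xcomp A φ k s from funext hx]
    exact aSTFT_sum _ _ fun k hk => hint k (Finset.mem_range_succ_iff.1 hk)
  have hsplit : aSTFT x g σ t η - T l =
      ∑ k ∈ Finset.range (K + 1), (aSTFT (xcomp A φ k) g σ t η - T k) +
        ∑ k ∈ (Finset.range (K + 1)).erase l, T k := by
    rw [hV, Finset.sum_sub_distrib, Finset.sum_erase_eq_sub (Finset.mem_range_succ_iff.2 hl)]
    ring
  rw [hsplit, errl, Msum, Finset.sum_mul]
  refine (norm_add_le _ _).trans (add_le_add ((norm_sum_le _ _).trans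
    (Finset.sum_le_sum fun k hk => hcomp k (Finset.mem_range_succ_iff.1 hk)))
    ((norm_sum_le _ _).trans (Finset.sum_le_sum fun k hk => ?_)))
  have hkK := Finset.mem_range_succ_iff.1 (Finset.mem_of_mem_erase hk)
  rw [norm_mul, norm_xcomp, abs_of_nonneg (hA k hkK)]
  exact mul_le_mul_of_nonneg_left (hcross k hkK (Finset.ne_of_mem_erase hk)) (hA k hkK)

theorem key_approximation_general (K : ℕ) (A φ : ℕ → ℝ → ℝ) (ε1 ε2 : ℝ) (x : ℝ → ℂ)
    (g : ℝ → ℝ) (σ : ℝ → ℝ) (α t : ℝ)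
    (hε2 : 0 < ε2)
    (hAreg : ∀ k ≤ K, ContDiff ℝ 1 (A k))
    (hAbdd : ∀ k ≤ K, ∃ C, ∀ s, |A k s| ≤ C)
    (hφreg : ∀ k ≤ K, ContDiff ℝ 2 (φ k))
    (hφ0 : ∀ s, φ 0 s = 0)
    (hApos : ∀ k ≤ K, ∀ s, 0 < A k s)
    (hφ'pos : ∀ k, 1 ≤ k → k ≤ K → ∃ c > 0, ∀ s, c ≤ deriv (φ k) s)
    (hfreq : ∃ d > 0, ∀ k, 2 ≤ k → k ≤ K → ∀ s, d ≤ deriv (φ k) s - deriv (φ (k - 1)) s)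
    (hAlip : ∀ k ≤ K, ∀ s τ, |A k (s + τ) - A k s| ≤ ε1 * |τ| * A k s)
    (hφ'' : ∀ k, 1 ≤ k → k ≤ K → ∀ s, |deriv (deriv (φ k)) s| ≤ ε2)
    (hx : ∀ s, x s = ∑ k ∈ Finset.range (K + 1), xcomp A φ k s)
    (hgint : Integrable g)
    (hgI1 : Integrable fun τ : ℝ => τ * g τ)
    (hgI2 : Integrable fun τ : ℝ => τ ^ 2 * g τ)
    (hgnorm : (∫ τ : ℝ, g τ) = 1)
    (hgeven : ∀ ξ, ‖hatg g (-ξ)‖ = ‖hatg g ξ‖)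
    (hgdec : ∀ ξ1 ξ2, 0 ≤ ξ1 → ξ1 ≤ ξ2 → ‖hatg g ξ2‖ ≤ ‖hatg g ξ1‖)
    (hα : 0 < α)
    (hσ : ∀ s, 0 < σ s)
    (hsep : ∀ s, ∀ k, 1 ≤ k → k ≤ K →
      2 * α / (deriv (φ k) s - deriv (φ (k - 1)) s) ≤ σ s)
    :
    ∀ l ≤ K,
      (∀ η : ℝ, |η - deriv (φ l) t| < α / σ t →
        ‖aSTFT x g σ t η - xcomp A φ l t * hatg g (σ t * (η - deriv (φ l) t))‖ ≤
          errl K A g σ α ε1 ε2 l t) ∧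
      A l t - errl K A g σ α ε1 ε2 l t ≤ ‖aSTFT x g σ t (deriv (φ l) t)‖ := by
  intro l hl
  have hσt := hσ t
  have hφ''all : ∀ k ≤ K, ∀ s, |deriv (deriv (φ k)) s| ≤ ε2 := by
    intro k hk s
    rcases Nat.eq_zero_or_pos k with rfl | hk1
    · simp [show φ 0 = 0 from funext hφ0, hε2.le]
    · exact hφ'' k hk1 hk s
  have hgap : ∀ k, 1 ≤ k → k ≤ K → 2 * α / σ t ≤ deriv (φ k) t - deriv (φ (k - 1)) t :=
    fun k hk1 hkK => (div_le_comm₀ (deriv_sub_deriv_pred_pos hφ0 hφ'pos hfreq hk1 hkK t) hσt).1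
      (hsep t k hk1 hkK)
  choose! C hC using hAbdd
  have hmain : ∀ η : ℝ, |η - deriv (φ l) t| < α / σ t →
      ‖aSTFT x g σ t η - xcomp A φ l t * hatg g (σ t * (η - deriv (φ l) t))‖ ≤
        errl K A g σ α ε1 ε2 l t := fun η hη =>
    norm_aSTFT_sub_le_errl hl hx (fun k hk => (hApos k hk t).le)
      (fun k hk => integrable_stftIntegrand_xcomp (hAreg k hk).continuous
        (hφreg k hk).continuous (hC k hk) hgint hσt)
      (fun k hk => norm_aSTFT_xcomp_sub_le hgint hgI1 hgI2 hσt (hAreg k hk).continuous (hC k hk)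
        (hApos k hk t).le (hAlip k hk t) (hφreg k hk) (hφ''all k hk))
      (fun k hk hkl => norm_hatg_le_of_separated hgeven hgdec hσt
        (one_le_abs_natCast_sub_natCast hkl)
        (mul_abs_sub_le_abs_sub_of_le_sub_pred hgap hk hl) hη)
  refine ⟨hmain, ?_⟩
  have h := hmain (deriv (φ l) t) (by simpa using div_pos hα hσt)
  rw [sub_self, mul_zero, hatg_zero, hgnorm, Complex.ofReal_one, mul_one, norm_sub_rev] at h
  have h' := norm_sub_norm_le (xcomp A φ l t) (aSTFT x g σ t (deriv (φ l) t))
  rw [norm_xcomp, abs_of_pos (hApos l hl t)] at h'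
  linarith

theorem key_approximation (K : ℕ) (A φ : ℕ → ℝ → ℝ) (ε1 ε2 : ℝ) (x : ℝ → ℂ)
    (g : ℝ → ℝ) (σ : ℝ → ℝ) (τ0 α t : ℝ)
    (hε1 : 0 < ε1) (hε2 : 0 < ε2)
    (hAreg : ∀ k ≤ K, ContDiff ℝ 1 (A k))
    (hAbdd : ∀ k ≤ K, ∃ C, ∀ s, |A k s| ≤ C)
    (hφreg : ∀ k ≤ K, ContDiff ℝ 2 (φ k))
    (hφ0 : ∀ s, φ 0 s = 0)
    (hApos : ∀ k ≤ K, ∀ s, 0 < A k s)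
    (hφ'pos : ∀ k, 1 ≤ k → k ≤ K → ∃ c > 0, ∀ s, c ≤ deriv (φ k) s)
    (hφ'bdd : ∀ k, 1 ≤ k → k ≤ K → ∃ C, ∀ s, deriv (φ k) s ≤ C)
    (hfreq : ∃ d > 0, ∀ k, 2 ≤ k → k ≤ K → ∀ s, d ≤ deriv (φ k) s - deriv (φ (k - 1)) s)
    (hAlip : ∀ k ≤ K, ∀ s τ, |A k (s + τ) - A k s| ≤ ε1 * |τ| * A k s)
    (hφ'' : ∀ k, 1 ≤ k → k ≤ K → ∀ s, |deriv (deriv (φ k)) s| ≤ ε2)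
    (hx : ∀ s, x s = ∑ k ∈ Finset.range (K + 1), xcomp A φ k s)
    (hgint : Integrable g)
    (hgL2 : MemLp g 2 (volume : Measure ℝ))
    (hgI1 : Integrable fun τ : ℝ => τ * g τ)
    (hgI2 : Integrable fun τ : ℝ => τ ^ 2 * g τ)
    (hgnorm : (∫ τ : ℝ, g τ) = 1)
    (hgeven : ∀ ξ, ‖hatg g (-ξ)‖ = ‖hatg g ξ‖)
    (hgdec : ∀ ξ1 ξ2, 0 ≤ ξ1 → ξ1 ≤ ξ2 → ‖hatg g ξ2‖ ≤ ‖hatg g ξ1‖)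
    (hτ0 : 0 < τ0) (hτ0' : τ0 < 1)
    (hα : 0 < α) (hgα : ‖hatg g α‖ = τ0)
    (hσ : ∀ s, 0 < σ s)
    (hsep : ∀ s, ∀ k, 1 ≤ k → k ≤ K →
      2 * α / (deriv (φ k) s - deriv (φ (k - 1)) s) ≤ σ s)
    :
    ∀ l ≤ K,
      (∀ η : ℝ, |η - deriv (φ l) t| < α / σ t →
        ‖aSTFT x g σ t η - xcomp A φ l t * hatg g (σ t * (η - deriv (φ l) t))‖ ≤
          errl K A g σ α ε1 ε2 l t) ∧
      A l t - errl K A g σ α ε1 ε2 l t ≤ ‖aSTFT x g σ t (deriv (φ l) t)‖ :=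
  key_approximation_general K A φ ε1 ε2 x g σ α t hε2 hAreg hAbdd hφreg hφ0 hApos hφ'pos hfreq hAlip
    hφ'' hx hgint hgI1 hgI2 hgnorm hgeven hgdec hα hσ hsep
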